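/- arXiv:1612.03873 — 2 statements merged into one kernel-verified Lean document; each statement's English description precedes it below -/
import Mathlib

section
/- (Edge-reversal lemma.) Let G ∈ Γ_{n,k} be strongly connected (every ordered pair of vertices is joined by a directed path), and let e = [ab] ∈ G be an edge with a ≠ b such that the graph G∖e obtained by deleting e is still strongly connected. Let G_e^∨ denote G with the edge e reversed (replaced by [ba]). Then ∑_{H⊆G} α(H) + ∑_{H⊆G_e^∨} α(H) = 2·(−1)^k·σ(G); consequently ∑_{H⊆G} α(H) = (−1)^k σ(G) holds if and only if ∑_{H⊆G_e^∨} α(H) = (−1)^k σ(G_e^∨), noting σ(G_e^∨) = σ(G). -/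
open Finset

open scoped Classical Nat

noncomputable section

/-- A directed graph with `n` labeled vertices and `k` labeled edges:
the `ℓ`-th edge is the ordered pair `G ℓ = (a, b)` (an edge from `a` to `b`; loops allowed). -/
abbrev DG (n k : ℕ) := Fin k → Fin n × Fin n

namespace DG

variable {n k : ℕ}

/-- `step G S a b`: the subgraph of `G` with edge-label set `S` has an edge from `a` to `b`. -/
def step (G : DG n k) (S : Finset (Fin k)) (a b : Fin n) : Prop :=
  ∃ e ∈ S, G e = (a, b)

/-- The subgraph of `G` with edge-label set `S` contains no directed cycle. -/
def Acyclic (G : DG n k) (S : Finset (Fin k)) : Prop :=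
  ∀ a : Fin n, ¬ Relation.TransGen (step G S) a a

/-- The edge `e` lies on a directed cycle of the subgraph of `G` with edge set `S`
(equivalently, there is a directed path from the head of `e` back to its tail). -/
def OnCycle (G : DG n k) (S : Finset (Fin k)) (e : Fin k) : Prop :=
  Relation.ReflTransGen (step G S) (G e).2 (G e).1

/-- Strongly semiconnected: every edge lies on a directed cycle. -/
def SSC (G : DG n k) (S : Finset (Fin k)) : Prop :=
  ∀ e ∈ S, OnCycle G S e

/-- Strongly connected: every ordered pair of vertices is joined by a directed path. -/
def StronglyConnected (G : DG n k) (S : Finset (Fin k)) : Prop :=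
  ∀ a b : Fin n, Relation.ReflTransGen (step G S) a b

/-- Adjacency in the underlying undirected graph. -/
def adj (G : DG n k) (S : Finset (Fin k)) (a b : Fin n) : Prop :=
  ∃ e ∈ S, G e = (a, b) ∨ G e = (b, a)

/-- `β₀`: the number of connected components of the underlying undirected graph
(isolated vertices count as components). -/
def beta0 (G : DG n k) (S : Finset (Fin k)) : ℕ :=
  Nat.card (Quot (adj G S))

/-- `α(H) = (−1)^{#edges}` if `H` is acyclic, `0` otherwise. -/
def alpha (G : DG n k) (S : Finset (Fin k)) : ℤ :=
  if Acyclic G S then (-1) ^ S.card else 0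

/-- `σ(H) = (−1)^{β₁}` if `H` is strongly semiconnected, `0` otherwise;
here `β₁ = #edges − n + β₀`, and `(−1)^{#edges − n + β₀} = (−1)^{#edges + n + β₀}`. -/
def sigma (G : DG n k) (S : Finset (Fin k)) : ℤ :=
  if SSC G S then (-1) ^ (S.card + n + beta0 G S) else 0

/-- The vertex `v` is isolated: incident to no edge. -/
def isolated (G : DG n k) (v : Fin n) : Prop :=
  ∀ e : Fin k, (G e).1 ≠ v ∧ (G e).2 ≠ v

/-- The vertex `v` is a sink: no edge starts at it. -/
def isSink (G : DG n k) (v : Fin n) : Prop :=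
  ∀ e : Fin k, (G e).1 ≠ v

end DG

/-!
Reversing `e` keeps the graph strongly connected, since `G ∖ e` already is, and for a strongly
connected graph `β₀ = 1`, so `σ = (-1)^(k - n + 1)`. Both claims then follow from
`∑_{T ⊆ E acyclic} (-1)^#T = (-1)^(n - 1)` for every strongly connected edge set `E`.
Fix a root `a`. Acyclic `T` in which some vertex is unreachable from `a` cancel in pairs by
toggling the least edge of `E` entering the set reachable from `a`. The remaining `T` have no
edge into `a` and some edge into every other vertex; fixing a breadth-first search tree from `a`,
they cancel in pairs by toggling the tree edge into the closest vertex whose in-edges in `T` are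
not exactly its tree edge, which leaves only the tree itself, with `n - 1` edges.
-/

open Relation
open scoped symmDiff

namespace Finset

variable {α : Type*} [DecidableEq α] {T : Finset α} {x : α}

lemma symmDiff_singleton_of_mem (h : x ∈ T) : T ∆ {x} = T.erase x := by
  ext y
  by_cases hy : y = x <;> simp [mem_symmDiff, hy, h]

lemma symmDiff_singleton_of_notMem (h : x ∉ T) : T ∆ {x} = insert x T := by
  ext y
  by_cases hy : y = x <;> simp [mem_symmDiff, hy, h]

lemma symmDiff_singleton_subset {E : Finset α} (hT : T ⊆ E) (hx : x ∈ E) : T ∆ {x} ⊆ E :=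
  symmDiff_subset_union.trans (union_subset hT (singleton_subset_iff.mpr hx))

lemma neg_one_pow_card_symmDiff_singleton :
    (-1 : ℤ) ^ #(T ∆ {x}) = -(-1) ^ #T := by
  by_cases h : x ∈ T
  · rw [symmDiff_singleton_of_mem h, ← card_erase_add_one h, pow_succ]
    ring
  · rw [symmDiff_singleton_of_notMem h, card_insert_of_notMem h, pow_succ]
    ring

lemma sum_neg_one_pow_card_eq_zero_of_toggle {s : Finset (Finset α)} (χ : ∀ T ∈ s, α)
    (hmem : ∀ T hT, T ∆ {χ T hT} ∈ s) (hχ : ∀ T hT, χ (T ∆ {χ T hT}) (hmem T hT) = χ T hT) :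
    ∑ T ∈ s, (-1 : ℤ) ^ #T = 0 := by
  refine sum_involution (fun T hT => T ∆ {χ T hT}) (fun T _ => ?_) (fun T _ _ => ?_) hmem
    (fun T hT => ?_)
  · rw [neg_one_pow_card_symmDiff_singleton, add_neg_cancel]
  · simp
  · rw [hχ, symmDiff_symmDiff_cancel_right]

end Finset

namespace DG

variable {n k : ℕ} {G : DG n k} {S T E : Finset (Fin k)} {a v x y : Fin n} {f : Fin k}

lemma step_mono (h : S ⊆ T) (hxy : step G S x y) : step G T x y :=
  let ⟨f, hf, hfxy⟩ := hxy; ⟨f, h hf, hfxy⟩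

lemma reflTransGen_mono (h : S ⊆ T) (hxy : ReflTransGen (step G S) x y) :
    ReflTransGen (step G T) x y :=
  ReflTransGen.mono (fun _ _ => step_mono h) _ _ hxy

lemma Acyclic.anti (h : S ⊆ T) (hT : Acyclic G T) : Acyclic G S :=
  fun x hx => hT x (TransGen.mono (fun _ _ => step_mono h) _ _ hx)

lemma StronglyConnected.mono (h : S ⊆ T) (hS : StronglyConnected G S) :
    StronglyConnected G T :=
  fun x y => reflTransGen_mono h (hS x y)

lemma step_update_of_notMem (hf : f ∉ S) (p : Fin n × Fin n) :
    step (Function.update G f p) S = step G S := by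
  ext x y
  refine exists_congr fun g => and_congr_right fun hg => ?_
  rw [Function.update_of_ne (ne_of_mem_of_not_mem hg hf)]

lemma beta0_eq_one (hn : 0 < n) (hS : StronglyConnected G S) : beta0 G S = 1 := by
  have hconn : ∀ x y, Quot.mk (adj G S) x = Quot.mk (adj G S) y := fun x y => by
    induction hS x y with
    | refl => rfl
    | tail _ hbc ih =>
      obtain ⟨f, hf, hfe⟩ := hbc
      exact ih.trans (Quot.sound ⟨f, hf, Or.inl hfe⟩)
  rw [beta0, Nat.card_eq_one_iff_exists]
  exact ⟨Quot.mk _ ⟨0, hn⟩, Quot.ind fun x => hconn x _⟩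

lemma sigma_of_stronglyConnected (hn : 0 < n) (hS : StronglyConnected G S) :
    sigma G S = (-1) ^ (#S + n + 1) := by
  rw [sigma, if_pos (show SSC G S from fun _ _ => hS _ _), beta0_eq_one hn hS]

lemma reflTransGen_insert (h : ReflTransGen (step G (insert f T)) x y) :
    ReflTransGen (step G T) x y ∨
      ReflTransGen (step G T) x (G f).1 ∧ ReflTransGen (step G T) (G f).2 y := by
  induction h with
  | refl => exact .inl .refl
  | @tail b c _ hbc ih =>
    obtain ⟨g, hg, hgbc⟩ := hbc
    rcases mem_insert.mp hg with rfl | hg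
    · obtain ⟨rfl, rfl⟩ := Prod.ext_iff.mp hgbc
      exact .inr ⟨ih.elim id (·.1), .refl⟩
    · have hbc : step G T b c := ⟨g, hg, hgbc⟩
      exact ih.imp (·.tail hbc) fun h => ⟨h.1, h.2.tail hbc⟩

lemma Acyclic.insert (hT : Acyclic G T) (hf : ¬ OnCycle G T f) : Acyclic G (insert f T) := by
  intro x hx
  obtain ⟨b, hxb, g, hg, hgbx⟩ := TransGen.tail'_iff.mp hx
  rcases mem_insert.mp hg with rfl | hg
  · have : OnCycle G T g ↔ ReflTransGen (step G T) x b := by rw [OnCycle, hgbx]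
    rcases reflTransGen_insert hxb with h | h
    · exact hf (this.mpr h)
    · rw [hgbx] at h
      exact hf (this.mpr h.1)
  · rcases reflTransGen_insert hxb with h | h
    · exact hT x (TransGen.tail' h ⟨g, hg, hgbx⟩)
    · exact hf ((h.2.tail ⟨g, hg, hgbx⟩).trans h.1)

lemma Acyclic.symmDiff_singleton (hT : Acyclic G T) (hf : ¬ OnCycle G T f) :
    Acyclic G (T ∆ {f}) := by
  by_cases hfT : f ∈ T
  · rw [symmDiff_singleton_of_mem hfT]
    exact hT.anti (erase_subset f T)
  · rw [symmDiff_singleton_of_notMem hfT]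
    exact hT.insert hf

lemma reflTransGen_eq_of_subset (hST : S ⊆ T)
    (h : ∀ f ∈ T, f ∉ S → ¬ ReflTransGen (step G S) a (G f).1) :
    ReflTransGen (step G T) a = ReflTransGen (step G S) a := by
  ext v
  refine ⟨fun hv => ?_, reflTransGen_mono hST⟩
  induction hv with
  | refl => exact .refl
  | @tail b c _ hbc ih =>
    obtain ⟨f, hf, hfbc⟩ := hbc
    have hfS : f ∈ S := by
      by_contra hfS
      exact h f hf hfS (by rw [hfbc]; exact ih)
    exact ih.tail ⟨f, hfS, hfbc⟩

lemma reflTransGen_symmDiff_singleton (hf : ¬ ReflTransGen (step G T) a (G f).1) :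
    ReflTransGen (step G (T ∆ {f})) a = ReflTransGen (step G T) a := by
  by_cases hfT : f ∈ T
  · rw [symmDiff_singleton_of_mem hfT]
    refine (reflTransGen_eq_of_subset (erase_subset f T) fun g hg hg' => ?_).symm
    obtain rfl : g = f := by simpa [hg] using hg'
    exact fun h => hf (reflTransGen_mono (erase_subset g T) h)
  · rw [symmDiff_singleton_of_notMem hfT]
    refine reflTransGen_eq_of_subset (subset_insert f T) fun g hg hg' => ?_
    obtain rfl : g = f := by simpa [hg'] using hg
    exact hf

lemma exists_crossing_edge (P : Fin n → Prop) (h : ReflTransGen (step G E) x y) (hx : ¬ P x)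
    (hy : P y) : ∃ f ∈ E, ¬ P (G f).1 ∧ P (G f).2 := by
  induction h with
  | refl => exact absurd hy hx
  | @tail b c _ hbc ih =>
    by_cases hb : P b
    · exact ih hb
    · obtain ⟨f, hf, hfbc⟩ := hbc
      exact ⟨f, hf, by simpa [hfbc] using ⟨hb, hy⟩⟩

theorem sum_acyclic_not_reachable_eq_zero (hE : StronglyConnected G E) (a : Fin n) :
    ∑ T ∈ E.powerset with Acyclic G T ∧ ∃ v, ¬ ReflTransGen (step G T) a v,
      (-1 : ℤ) ^ #T = 0 := by
  set cross : Finset (Fin k) → Finset (Fin k) := fun T =>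
    {f ∈ E | ¬ ReflTransGen (step G T) a (G f).1 ∧ ReflTransGen (step G T) a (G f).2}
  have cross_nonempty :
      ∀ T ∈ {T ∈ E.powerset | Acyclic G T ∧ ∃ v, ¬ ReflTransGen (step G T) a v},
        (cross T).Nonempty := by
    intro T hT
    obtain ⟨-, -, v, hv⟩ := by simpa using hT
    obtain ⟨f, hf, hcross⟩ := exists_crossing_edge _ (hE v a) hv .refl
    exact ⟨f, mem_filter.mpr ⟨hf, hcross⟩⟩
  have cross_symmDiff : ∀ T, ∀ f ∈ cross T, cross (T ∆ {f}) = cross T := fun T f hf => by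
    simp only [cross, reflTransGen_symmDiff_singleton (mem_filter.mp hf).2.1]
  refine sum_neg_one_pow_card_eq_zero_of_toggle (fun T hT => (cross T).min' (cross_nonempty T hT))
    (fun T hT => ?_) (fun T hT => ?_)
  · obtain ⟨hfE, hfa, hfb⟩ := mem_filter.mp (min'_mem _ (cross_nonempty T hT))
    obtain ⟨hTE, hT, v, hv⟩ := by simpa using hT
    rw [mem_filter, mem_powerset, reflTransGen_symmDiff_singleton hfa]
    exact ⟨symmDiff_singleton_subset hTE hfE, hT.symmDiff_singleton fun h => hfa (hfb.trans h),
      v, hv⟩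
  · simp only [cross_symmDiff T _ (min'_mem _ _)]

def inEdges (G : DG n k) (T : Finset (Fin k)) (v : Fin n) : Finset (Fin k) :=
  {f ∈ T | (G f).2 = v}

@[simp]
lemma mem_inEdges : f ∈ inEdges G T v ↔ f ∈ T ∧ (G f).2 = v := mem_filter

lemma inEdges_symmDiff_singleton_self :
    inEdges G (T ∆ {f}) (G f).2 = inEdges G T (G f).2 ∆ {f} := by
  ext g
  by_cases hg : g = f <;> simp [mem_symmDiff, hg]

lemma inEdges_symmDiff_singleton_of_ne (h : (G f).2 ≠ v) :
    inEdges G (T ∆ {f}) v = inEdges G T v := by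
  ext g
  by_cases hg : g = f
  · subst hg; simp [mem_symmDiff, h]
  · simp [mem_symmDiff, hg]

def IsRooted (G : DG n k) (T : Finset (Fin k)) (a : Fin n) : Prop :=
  inEdges G T a = ∅ ∧ ∀ v ≠ a, (inEdges G T v).Nonempty

lemma reachable_iff_isRooted (hT : Acyclic G T) :
    (∀ v, ReflTransGen (step G T) a v) ↔ IsRooted G T a := by
  constructor
  · intro h
    refine ⟨eq_empty_of_forall_notMem fun f hf => ?_, fun v hv => ?_⟩
    · obtain ⟨hfT, hfa⟩ := mem_inEdges.mp hf
      exact hT a (TransGen.tail' (h (G f).1) ⟨f, hfT, Prod.ext rfl hfa⟩)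
    · obtain h | ⟨b, -, f, hf, hfbv⟩ := (h v).cases_tail
      · exact absurd h hv
      · exact ⟨f, mem_inEdges.mpr ⟨hf, congrArg Prod.snd hfbv⟩⟩
  · rintro ⟨-, h⟩
    have : Std.Irrefl (TransGen (step G T)) := ⟨hT⟩
    intro v
    have hwf := Finite.wellFounded_of_trans_of_irrefl (TransGen (step G T))
    induction v using hwf.induction with
    | _ v ih =>
      by_cases hv : v = a
      · exact hv ▸ .refl
      · obtain ⟨f, hf⟩ := h v hv
        obtain ⟨hfT, hfv⟩ := mem_inEdges.mp hf
        have hstep : step G T (G f).1 v := ⟨f, hfT, Prod.ext rfl hfv⟩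
        exact (ih _ (.single hstep)).tail hstep

lemma acyclic_of_forall_lt (m : Fin n → ℕ) (h : ∀ f ∈ T, m (G f).1 < m (G f).2) :
    Acyclic G T := by
  have hlt : ∀ {x y}, TransGen (step G T) x y → m x < m y := fun hxy => by
    induction hxy with
    | single hs => obtain ⟨f, hf, hfe⟩ := hs; simpa [hfe] using h f hf
    | tail _ hs ih => obtain ⟨f, hf, hfe⟩ := hs; exact ih.trans (by simpa [hfe] using h f hf)
  exact fun x hx => lt_irrefl _ (hlt hx)

section ParentEdges

variable {m : Fin n → ℕ} {c : {v // v ≠ a} → Fin k}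

def badVertices (G : DG n k) (T : Finset (Fin k)) (c : {v // v ≠ a} → Fin k) :
    Finset {v // v ≠ a} :=
  {v | inEdges G T v ≠ {c v}}

lemma inEdges_image_parent (hch : ∀ v, (G (c v)).2 = v) (v : {v // v ≠ a}) :
    inEdges G (univ.image c) v = {c v} := by
  ext f
  simp only [mem_inEdges, mem_image, mem_univ, true_and, mem_singleton]
  constructor
  · rintro ⟨⟨u, rfl⟩, hu⟩
    exact congrArg c (Subtype.ext ((hch u).symm.trans hu))
  · rintro rfl
    exact ⟨⟨v, rfl⟩, hch v⟩

lemma isRooted_image_parent (hch : ∀ v, (G (c v)).2 = v) : IsRooted G (univ.image c) a := by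
  refine ⟨eq_empty_of_forall_notMem fun f hf => ?_, fun v hv => ?_⟩
  · obtain ⟨hf, hfa⟩ := mem_inEdges.mp hf
    obtain ⟨u, -, rfl⟩ := mem_image.mp hf
    exact u.2 (hch u ▸ hfa)
  · exact ⟨c ⟨v, hv⟩, mem_inEdges.mpr ⟨mem_image_of_mem _ (mem_univ _), hch _⟩⟩

lemma badVertices_eq_empty_iff (hch : ∀ v, (G (c v)).2 = v) (hT : inEdges G T a = ∅) :
    badVertices G T c = ∅ ↔ T = univ.image c := by
  refine ⟨fun hbad => ?_, fun h => by simp [h, badVertices, inEdges_image_parent hch]⟩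
  have hgood : ∀ v : {v // v ≠ a}, inEdges G T v = {c v} := fun v => by
    simpa [badVertices] using (eq_empty_iff_forall_notMem.mp hbad v)
  ext f
  constructor
  · intro hf
    have hfa : (G f).2 ≠ a := fun hfa =>
      (eq_empty_iff_forall_notMem.mp hT) f (by simp [hf, hfa])
    have : f ∈ inEdges G T (G f).2 := by simp [hf]
    rw [show (G f).2 = ((⟨(G f).2, hfa⟩ : {v // v ≠ a}) : Fin n) from rfl, hgood,
      mem_singleton] at this
    exact this ▸ mem_image_of_mem _ (mem_univ _)
  · intro hf
    obtain ⟨u, -, rfl⟩ := mem_image.mp hf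
    exact (mem_inEdges.mp ((hgood u).symm ▸ mem_singleton_self (c u))).1

/-- Below level `W` of `m`, paths of `T` only run along parent edges, so `m` increases
along them. -/
lemma le_of_reflTransGen (hcm : ∀ v, m (G (c v)).1 < m v) {W : ℕ} (ha : inEdges G T a = ∅)
    (hgood : ∀ v : {v // v ≠ a}, m v < W → inEdges G T v = {c v})
    (h : ReflTransGen (step G T) x y) (hy : m y < W) : m x ≤ m y := by
  induction h with
  | refl => exact le_rfl
  | @tail b z _ hbz ih =>
    obtain ⟨f, hfT, hfbz⟩ := hbz
    have hz : z ≠ a := fun hz =>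
      (eq_empty_iff_forall_notMem.mp ha) f (mem_inEdges.mpr ⟨hfT, by rw [hfbz, hz]⟩)
    have hfc : f = c ⟨z, hz⟩ := by
      have hf : f ∈ inEdges G T z := mem_inEdges.mpr ⟨hfT, by rw [hfbz]⟩
      rwa [show z = ((⟨z, hz⟩ : {v // v ≠ a}) : Fin n) from rfl, hgood _ hy,
        mem_singleton] at hf
    have hb : m b < m z := by simpa [← hfc, hfbz] using hcm ⟨z, hz⟩
    exact (ih (hb.trans hy)).trans hb.le

variable {w : {v // v ≠ a}}

lemma badVertices_symmDiff_parent (hch : ∀ v, (G (c v)).2 = v)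
    (hne : (inEdges G T w).Nonempty) (hw : w ∈ badVertices G T c) :
    badVertices G (T ∆ {c w}) c = badVertices G T c := by
  ext v
  by_cases hvw : v = w
  · subst hvw
    have := inEdges_symmDiff_singleton_self (G := G) (T := T) (f := c v)
    rw [hch] at this
    simp only [badVertices, mem_filter, mem_univ, true_and, this, ne_eq, symmDiff_eq_right]
    simp only [badVertices, mem_filter, mem_univ, true_and] at hw
    exact iff_of_true hne.ne_empty hw
  · have hne : (G (c w)).2 ≠ v := by rw [hch]; exact fun h => hvw (Subtype.ext h).symm
    simp [badVertices, inEdges_symmDiff_singleton_of_ne hne]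

lemma IsRooted.symmDiff_parent (hch : ∀ v, (G (c v)).2 = v) (hT : IsRooted G T a)
    (hw : w ∈ badVertices G T c) : IsRooted G (T ∆ {c w}) a := by
  refine ⟨?_, fun v hv => ?_⟩
  · rw [inEdges_symmDiff_singleton_of_ne (by rw [hch]; exact w.2)]
    exact hT.1
  · by_cases hvw : v = w
    · have := inEdges_symmDiff_singleton_self (G := G) (T := T) (f := c w)
      rw [hch, ← hvw] at this
      rw [this, symmDiff_nonempty]
      simpa [badVertices, hvw] using hw
    · rw [inEdges_symmDiff_singleton_of_ne (by rw [hch]; exact Ne.symm hvw)]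
      exact hT.2 v hv

lemma not_onCycle_parent (hch : ∀ v, (G (c v)).2 = v) (hcm : ∀ v, m (G (c v)).1 < m v)
    (ha : inEdges G T a = ∅)
    (hmin : ∀ v : {v // v ≠ a}, m v < m w → v ∉ badVertices G T c) :
    ¬ OnCycle G T (c w) := by
  intro h
  rw [OnCycle, hch] at h
  have hgood : ∀ v : {v // v ≠ a}, m v < m w → inEdges G T v = {c v} := fun v hv => by
    simpa [badVertices] using hmin v hv
  exact (le_of_reflTransGen hcm ha hgood h (hcm w)).not_gt (hcm w)

end ParentEdges

theorem sum_acyclic_isRooted {m : Fin n → ℕ} {c : {v // v ≠ a} → Fin k} (hcE : ∀ v, c v ∈ E)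
    (hch : ∀ v, (G (c v)).2 = v) (hcm : ∀ v, m (G (c v)).1 < m v) :
    ∑ T ∈ E.powerset with Acyclic G T ∧ IsRooted G T a, (-1 : ℤ) ^ #T = (-1) ^ (n - 1) := by
  set M := {T ∈ E.powerset | Acyclic G T ∧ IsRooted G T a}
  have hT₀ : univ.image c ∈ M := by
    refine mem_filter.mpr ⟨mem_powerset.mpr (image_subset_iff.mpr fun v _ => hcE v), ?_,
      isRooted_image_parent hch⟩
    refine acyclic_of_forall_lt m fun f hf => ?_
    obtain ⟨u, -, rfl⟩ := mem_image.mp hf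
    simpa [hch u] using hcm u
  have hcard : #(univ.image c) = n - 1 := by
    have hinj : Function.Injective c := fun u v huv =>
      Subtype.ext (by rw [← hch u, ← hch v, huv])
    rw [card_image_of_injective _ hinj]
    simp
  have hbad : ∀ T ∈ M.erase (univ.image c), (badVertices G T c).Nonempty := fun T hT => by
    obtain ⟨hT₀, hT⟩ := mem_erase.mp hT
    exact nonempty_iff_ne_empty.mpr fun h =>
      hT₀ ((badVertices_eq_empty_iff hch (mem_filter.mp hT).2.2.1).mp h)
  choose w hw hwmin using fun (B : Finset {v // v ≠ a}) (hB : B.Nonempty) =>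
    exists_min_image B (fun v => m v) hB
  rw [← add_sum_erase M _ hT₀, hcard, add_eq_left]
  refine sum_neg_one_pow_card_eq_zero_of_toggle (fun T hT => c (w _ (hbad T hT)))
    (fun T hT => ?_) (fun T hT => ?_)
  all_goals
    obtain ⟨-, hTM⟩ := mem_erase.mp hT
    obtain ⟨hTE, hTac, hTroot⟩ := by simpa [M] using hTM
    have hwT := hw _ (hbad T hT)
    have hsame := badVertices_symmDiff_parent hch (hTroot.2 _ (w _ (hbad T hT)).2) hwT
  · refine mem_erase.mpr ⟨fun h => ?_, mem_filter.mpr ⟨mem_powerset.mpr ?_, ?_, ?_⟩⟩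
    · have := (badVertices_eq_empty_iff hch (hTroot.symmDiff_parent hch hwT).1).mpr h
      exact (hbad T hT).ne_empty (hsame ▸ this)
    · exact symmDiff_singleton_subset hTE (hcE _)
    · exact hTac.symmDiff_singleton (not_onCycle_parent hch hcm hTroot.1 fun v hv hvB =>
        (hwmin _ (hbad T hT) v hvB).not_gt hv)
    · exact hTroot.symmDiff_parent hch hwT
  · simp only [hsame]

def reachWithin (G : DG n k) (E : Finset (Fin k)) (a : Fin n) : ℕ → Fin n → Prop
  | 0, v => v = a
  | t + 1, v => v = a ∨ ∃ f ∈ E, (G f).2 = v ∧ reachWithin G E a t (G f).1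

lemma exists_reachWithin (h : ReflTransGen (step G E) a v) : ∃ t, reachWithin G E a t v := by
  induction h with
  | refl => exact ⟨0, rfl⟩
  | tail _ hbc ih =>
    obtain ⟨t, ht⟩ := ih
    obtain ⟨f, hf, hfbc⟩ := hbc
    exact ⟨t + 1, .inr ⟨f, hf, by rw [hfbc], by rwa [hfbc]⟩⟩

lemma exists_parent_edges (h : ∀ v, ReflTransGen (step G E) a v) :
    ∃ (m : Fin n → ℕ) (c : {v // v ≠ a} → Fin k),
      (∀ v, c v ∈ E) ∧ (∀ v, (G (c v)).2 = v) ∧ ∀ v, m (G (c v)).1 < m v := by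
  let m v := Nat.find (exists_reachWithin (h v))
  have hparent : ∀ v : {v // v ≠ a}, ∃ f ∈ E, (G f).2 = v ∧ m (G f).1 < m v := by
    rintro ⟨v, hv⟩
    have hspec : reachWithin G E a (m v) v := Nat.find_spec (exists_reachWithin (h v))
    obtain ⟨t, ht⟩ : ∃ t, m v = t + 1 :=
      Nat.exists_eq_succ_of_ne_zero fun h0 => hv (by rwa [h0] at hspec)
    rw [ht] at hspec
    obtain hva | ⟨f, hf, hfv, hft⟩ := hspec
    · exact absurd hva hv
    · exact ⟨f, hf, hfv, ht ▸ Nat.lt_succ_of_le (Nat.find_min' _ hft)⟩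
  choose c hcE hch hcm using hparent
  exact ⟨m, c, hcE, hch, hcm⟩

theorem sum_alpha_of_stronglyConnected (hn : 0 < n) (hE : StronglyConnected G E) :
    ∑ T ∈ E.powerset, alpha G T = (-1) ^ (n + 1) := by
  let a : Fin n := ⟨0, hn⟩
  obtain ⟨m, c, hcE, hch, hcm⟩ := exists_parent_edges (hE a)
  calc ∑ T ∈ E.powerset, alpha G T
      = ∑ T ∈ E.powerset with Acyclic G T, (-1 : ℤ) ^ #T := (sum_filter _ _).symm
    _ = ∑ T ∈ E.powerset with Acyclic G T ∧ IsRooted G T a, (-1 : ℤ) ^ #T := by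
      rw [← sum_filter_add_sum_filter_not _ fun T => ∀ v, ReflTransGen (step G T) a v,
        filter_filter, filter_filter]
      simp only [not_forall]
      rw [sum_acyclic_not_reachable_eq_zero hE a, add_zero]
      exact sum_congr (filter_congr fun T _ => and_congr_right reachable_iff_isRooted)
        fun _ _ => rfl
    _ = (-1) ^ (n - 1) := sum_acyclic_isRooted hcE hch hcm
    _ = (-1) ^ (n + 1) := by rw [show n + 1 = n - 1 + 2 by omega, pow_add]; norm_num

end DG

theorem edge_reversal_general (n k : ℕ) (G : DG n k) (e : Fin k)
    (hGe : DG.StronglyConnected G (Finset.univ.erase e)) :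
    ((∑ S : Finset (Fin k), DG.alpha G S)
        + (∑ S : Finset (Fin k), DG.alpha (Function.update G e ((G e).2, (G e).1)) S)
      = 2 * (-1) ^ k * DG.sigma G Finset.univ)
    ∧ DG.sigma (Function.update G e ((G e).2, (G e).1)) Finset.univ
        = DG.sigma G Finset.univ
    ∧ ((∑ S : Finset (Fin k), DG.alpha G S) = (-1) ^ k * DG.sigma G Finset.univ
        ↔ (∑ S : Finset (Fin k), DG.alpha (Function.update G e ((G e).2, (G e).1)) S)
            = (-1) ^ k
              * DG.sigma (Function.update G e ((G e).2, (G e).1)) Finset.univ) := by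
  have hn : 0 < n := (G e).1.pos
  have hG : G.StronglyConnected univ := hGe.mono (erase_subset e univ)
  have hG' : DG.StronglyConnected (Function.update G e ((G e).2, (G e).1)) univ := by
    refine DG.StronglyConnected.mono (erase_subset e univ) fun x y => ?_
    rw [DG.step_update_of_notMem (notMem_erase e univ)]
    exact hGe x y
  have hsum : ∀ {H : DG n k}, H.StronglyConnected univ → ∑ S, H.alpha S = (-1) ^ (n + 1) :=
    fun hH => by rw [← powerset_univ]; exact DG.sum_alpha_of_stronglyConnected hn hH
  have hsigma : ∀ {H : DG n k}, H.StronglyConnected univ → H.sigma univ = (-1) ^ (k + n + 1) :=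
    fun hH => by rw [DG.sigma_of_stronglyConnected hn hH, card_univ, Fintype.card_fin]
  have hsign : (-1 : ℤ) ^ k * (-1) ^ (k + n + 1) = (-1) ^ (n + 1) := by
    rw [← pow_add, show k + (k + n + 1) = 2 * k + (n + 1) by ring, pow_add, pow_mul]
    norm_num
  rw [hsum hG, hsum hG', hsigma hG, hsigma hG']
  exact ⟨by linear_combination (-2 : ℤ) * hsign, rfl, Iff.rfl⟩

/-- edge-reversal lemma. Let `G` be strongly connected and let `e = [ab]`
with `a ≠ b` be an edge whose deletion leaves `G` strongly connected.  With `G_e^∨` the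
graph `G` with the edge `e` reversed:
`∑_{H⊆G} α(H) + ∑_{H⊆G_e^∨} α(H) = 2·(−1)^k·σ(G)`; moreover `σ(G_e^∨) = σ(G)`, and
consequently `∑_{H⊆G} α(H) = (−1)^k σ(G)` iff `∑_{H⊆G_e^∨} α(H) = (−1)^k σ(G_e^∨)`. -/
theorem edge_reversal (n k : ℕ) (hn : 1 ≤ n) (G : DG n k) (e : Fin k)
    (hab : (G e).1 ≠ (G e).2)
    (hG : DG.StronglyConnected G Finset.univ)
    (hGe : DG.StronglyConnected G (Finset.univ.erase e)) :
    ((∑ S : Finset (Fin k), DG.alpha G S)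
        + (∑ S : Finset (Fin k), DG.alpha (Function.update G e ((G e).2, (G e).1)) S)
      = 2 * (-1) ^ k * DG.sigma G Finset.univ)
    ∧ DG.sigma (Function.update G e ((G e).2, (G e).1)) Finset.univ
        = DG.sigma G Finset.univ
    ∧ ((∑ S : Finset (Fin k), DG.alpha G S) = (-1) ^ k * DG.sigma G Finset.univ
        ↔ (∑ S : Finset (Fin k), DG.alpha (Function.update G e ((G e).2, (G e).1)) S)
            = (-1) ^ k
              * DG.sigma (Function.update G e ((G e).2, (G e).1)) Finset.univ) :=
  edge_reversal_general n k G e hGe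
end
end

section
/- If a directed graph G ∈ Γ_{n,k} contains an edge e that is not contained in any directed cycle of G, then ∑_{H⊆G} α(H) = 0 (the sum over all subgraphs of G). -/
open Finset

open scoped Classical Nat

noncomputable section

/-!
Pairing each edge set `S ∌ e` with `S ∪ {e}` cancels the sum: since `e` lies on no cycle,
adding it to an acyclic subgraph keeps it acyclic, so `α(S ∪ {e}) = -α(S)` in every case.
-/

theorem Relation.TransGen.or_exists_of_sup {α : Type*} {r s : α → α → Prop} {a b : α}
    (h : Relation.TransGen (fun x y => r x y ∨ s x y) a b) :
    Relation.TransGen r a b ∨ ∃ c d, s c d ∧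
      Relation.ReflTransGen (fun x y => r x y ∨ s x y) a c ∧
      Relation.ReflTransGen (fun x y => r x y ∨ s x y) d b := by
  induction h with
  | @single c h =>
    rcases h with h | h
    · exact Or.inl (.single h)
    · exact Or.inr ⟨a, c, h, .refl, .refl⟩
  | @tail b c hab hbc ih =>
    rcases ih with ih | ⟨p, q, hpq, hap, hqb⟩
    · rcases hbc with hbc | hbc
      · exact Or.inl (ih.tail hbc)
      · exact Or.inr ⟨b, c, hbc, hab.to_reflTransGen, .refl⟩
    · exact Or.inr ⟨p, q, hpq, hap, hqb.tail hbc⟩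

namespace DG

variable {n k : ℕ} {G : DG n k} {S T : Finset (Fin k)} {e : Fin k}

theorem step_mono_s9 (hST : S ⊆ T) {a b : Fin n} (h : G.step S a b) : G.step T a b :=
  let ⟨f, hf, hGf⟩ := h; ⟨f, hST hf, hGf⟩

theorem step_insert {a b : Fin n} : G.step (insert e S) a b ↔ G.step S a b ∨ G e = (a, b) := by
  simp only [step, Finset.exists_mem_insert]
  exact or_comm

theorem OnCycle.mono (hST : S ⊆ T) (h : G.OnCycle S e) : G.OnCycle T e :=
  Relation.ReflTransGen.mono (fun _ _ => step_mono_s9 hST) _ _ h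

theorem Acyclic.anti_s9 (hST : S ⊆ T) (h : G.Acyclic T) : G.Acyclic S :=
  fun a ha => h a (Relation.TransGen.mono (fun _ _ => step_mono_s9 hST) _ _ ha)

theorem acyclic_insert_iff (he : ¬ G.OnCycle (insert e S) e) :
    G.Acyclic (insert e S) ↔ G.Acyclic S := by
  refine ⟨Acyclic.anti_s9 (Finset.subset_insert e S), fun h a ha => ?_⟩
  have ha' : Relation.TransGen (fun x y => G.step S x y ∨ G e = (x, y)) a a :=
    Relation.TransGen.mono (fun _ _ => step_insert.1) _ _ ha
  rcases ha'.or_exists_of_sup with hS | ⟨c, d, hcd, hac, hda⟩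
  · exact h a hS
  · have hpath := Relation.ReflTransGen.mono (fun _ _ => step_insert.2) _ _ (hda.trans hac)
    exact he (by rw [OnCycle, hcd]; exact hpath)

theorem alpha_insert (heS : e ∉ S) (he : ¬ G.OnCycle (insert e S) e) :
    G.alpha (insert e S) = -G.alpha S := by
  by_cases hS : G.Acyclic S
  · rw [alpha, alpha, if_pos ((acyclic_insert_iff he).2 hS), if_pos hS,
      Finset.card_insert_of_notMem heS, pow_succ, mul_neg_one]
  · rw [alpha, alpha, if_neg (mt (acyclic_insert_iff he).1 hS), if_neg hS, neg_zero]

end DG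

theorem sum_alpha_eq_zero_general (n k : ℕ) (G : DG n k) (e : Fin k)
    (he : ¬ DG.OnCycle G Finset.univ e) :
    ∑ S : Finset (Fin k), DG.alpha G S = 0 := by
  have heS : e ∉ Finset.univ.erase e := Finset.notMem_erase e _
  rw [← Finset.powerset_univ, ← Finset.insert_erase (Finset.mem_univ e),
    Finset.sum_powerset_insert heS, ← Finset.sum_add_distrib]
  refine Finset.sum_eq_zero fun S hS => ?_
  have heS' : e ∉ S := fun h => heS (Finset.mem_powerset.1 hS h)
  rw [DG.alpha_insert heS' fun h => he (h.mono (Finset.subset_univ _)), add_neg_cancel]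

/-- If a directed graph `G ∈ Γ_{n,k}` contains an edge `e` that lies on no
directed cycle of `G` (equivalently, there is no directed path from the head of `e` back to
its tail), then `∑_{H⊆G} α(H) = 0`. -/
theorem sum_alpha_eq_zero (n k : ℕ) (hn : 1 ≤ n) (G : DG n k) (e : Fin k)
    (he : ¬ DG.OnCycle G Finset.univ e) :
    ∑ S : Finset (Fin k), DG.alpha G S = 0 :=
  sum_alpha_eq_zero_general n k G e he
end
end
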